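/- arXiv:1009.2668 — 4 statements merged into one kernel-verified Lean document; each statement's English description precedes it below -/
import Mathlib

section
/- Let R be a commutative Noetherian local ring with maximal ideal m, let Λ be a set, and for each λ ∈ Λ let P_λ be a prime ideal of R with P_λ ≠ m. Then every R-linear map from E(R/m) to the direct sum ⊕_{λ∈Λ} E(R/P_λ) is zero. -/
/-- `E` is an injective hull of the `R`-module `M`: `E` is injective and `M` embeds into `E`
as an essential submodule. -/
def IsInjectiveHull (R : Type*) [CommRing R] (M E : Type*)
    [AddCommGroup M] [Module R M] [AddCommGroup E] [Module R E] : Prop :=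
  Module.Injective R E ∧
    ∃ i : M →ₗ[R] E, Function.Injective i ∧
      ∀ N : Submodule R E, N ≠ ⊥ → N ⊓ LinearMap.range i ≠ ⊥

/-! Every element of `E(R/m)` is killed by a power of any `z ∈ m`, while for `z ∈ m \ P` the
element `z` acts injectively on `E(R/P)`, since it does so on `R/P` and `R/P ⊆ E(R/P)` is
essential. Taking `z ∈ m \ P l` separately for each index `l`, the `l`-th component of `f x` is
killed by some `z ^ n`, which acts injectively on `E(R/P l)`, so it vanishes; working one component
at a time makes prime avoidance unnecessary. -/

theorem Ideal.IsPrime.isSMulRegular_quotient {R : Type*} [CommRing R] {P : Ideal R}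
    (hP : P.IsPrime) {z : R} (hz : z ∉ P) : IsSMulRegular (R ⧸ P) z :=
  (isSMulRegular_quotient_iff_mem_of_smul_mem P z).mpr fun _ hx =>
    (hP.mem_or_mem hx).resolve_left hz

section EssentialExtension

variable {R M E : Type*} [CommRing R] [AddCommGroup M] [Module R M] [AddCommGroup E] [Module R E]
  {i : M →ₗ[R] E}

theorem exists_smul_ne_zero_mem_range_of_essential
    (hess : ∀ N : Submodule R E, N ≠ ⊥ → N ⊓ LinearMap.range i ≠ ⊥) {x : E} (hx : x ≠ 0) :
    ∃ r : R, r • x ≠ 0 ∧ r • x ∈ LinearMap.range i := by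
  have hspan : R ∙ x ≠ ⊥ := by simpa [Submodule.span_singleton_eq_bot] using hx
  obtain ⟨w, hw, hw0⟩ := Submodule.exists_mem_ne_zero_of_ne_bot (hess _ hspan)
  obtain ⟨hwx, hwi⟩ := Submodule.mem_inf.mp hw
  obtain ⟨r, rfl⟩ := Submodule.mem_span_singleton.mp hwx
  exact ⟨r, hw0, hwi⟩

theorem isSMulRegular_of_essential (hi : Function.Injective i)
    (hess : ∀ N : Submodule R E, N ≠ ⊥ → N ⊓ LinearMap.range i ≠ ⊥) {z : R}
    (hz : IsSMulRegular M z) : IsSMulRegular E z := by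
  refine IsSMulRegular.of_right_eq_zero_of_smul fun y hy => by_contra fun hy0 => ?_
  obtain ⟨r, hr0, a, ha⟩ := exists_smul_ne_zero_mem_range_of_essential hess hy0
  have hza : z • a = 0 := hi <| by rw [map_smul, ha, smul_comm, hy, smul_zero, map_zero]
  exact hr0 (by rw [← ha, hz.right_eq_zero_of_smul hza, map_zero])

/-- The ideals `ann (z ^ k • x)` increase with `k`; once they stabilise at `n`, any
`r • z ^ n • x ∈ M` is killed by `z`, so `r ∈ ann (z ^ (n + 1) • x) = ann (z ^ n • x)`. Hence
`R ∙ z ^ n • x` meets `M` trivially, and essentiality forces `z ^ n • x = 0`. -/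
theorem exists_pow_smul_eq_zero_of_essential [IsNoetherianRing R]
    (hess : ∀ N : Submodule R E, N ≠ ⊥ → N ⊓ LinearMap.range i ≠ ⊥) {z : R}
    (hz : z ∈ Module.annihilator R M) (x : E) : ∃ n : ℕ, z ^ n • x = 0 := by
  let ann : ℕ →o Ideal R :=
    ⟨fun k => LinearMap.ker (LinearMap.toSpanSingleton R E (z ^ k • x)),
      monotone_nat_of_le_succ fun k r hr => by
        simp only [LinearMap.mem_ker, LinearMap.toSpanSingleton_apply] at hr ⊢
        rw [pow_succ', mul_smul, smul_comm, hr, smul_zero]⟩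
  obtain ⟨n, hn⟩ := monotone_stabilizes_iff_noetherian.mpr inferInstance ann
  refine ⟨n, by_contra fun hx => ?_⟩
  obtain ⟨r, hr0, a, ha⟩ := exists_smul_ne_zero_mem_range_of_essential hess hx
  have hr : r ∈ ann (n + 1) := by
    change r • z ^ (n + 1) • x = 0
    rw [pow_succ', mul_smul, smul_comm r z, ← ha, ← map_smul, Module.mem_annihilator.mp hz,
      map_zero]
  rw [← hn (n + 1) n.le_succ] at hr
  exact hr0 hr

end EssentialExtension

theorem stmt_3 (R : Type*) [CommRing R] [IsNoetherianRing R] [IsLocalRing R]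
    (Λ : Type*) (P : Λ → Ideal R) (hP : ∀ l, (P l).IsPrime)
    (hPm : ∀ l, P l ≠ IsLocalRing.maximalIdeal R)
    (E₀ : Type*) [AddCommGroup E₀] [Module R E₀]
    (h₀ : IsInjectiveHull R (R ⧸ IsLocalRing.maximalIdeal R) E₀)
    (E : Λ → Type*) [∀ l, AddCommGroup (E l)] [∀ l, Module R (E l)]
    (hE : ∀ l, IsInjectiveHull R (R ⧸ P l) (E l))
    (f : E₀ →ₗ[R] (DirectSum Λ E)) : f = 0 := by
  obtain ⟨-, _, -, hess₀⟩ := h₀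
  ext x l
  obtain ⟨-, _, hi, hess⟩ := hE l
  obtain ⟨z, hzm, hzP⟩ := SetLike.exists_of_lt
    ((IsLocalRing.le_maximalIdeal (hP l).ne_top).lt_of_ne (hPm l))
  obtain ⟨n, hn⟩ := exists_pow_smul_eq_zero_of_essential hess₀ (z := z)
    (by rwa [Ideal.annihilator_quotient]) x
  have hreg : IsSMulRegular (E l) (z ^ n) :=
    (isSMulRegular_of_essential hi hess ((hP l).isSMulRegular_quotient hzP)).pow n
  refine hreg.right_eq_zero_of_smul ?_
  rw [← DirectSum.smul_apply, ← map_smul, hn, map_zero]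
  rfl
end

section
/- Let K be a field of prime characteristic p and let L = K^{1/p} be the field extension of K obtained by adjoining all p-th roots of elements of K. Give Hom_K(L, K) the L-vector space structure (ℓ·φ)(x) = φ(ℓx). Then Hom_K(L, K) is a one-dimensional L-vector space if and only if L is a finite extension of K. -/
open Cardinal Module

theorem stmt_4 (K L : Type*) [Field K] [Field L] [Algebra K L]
    (p : ℕ) [Fact p.Prime] [CharP K p]
    (hpow : ∀ x : L, ∃ y : K, x ^ p = algebraMap K L y)
    (hroots : ∀ y : K, ∃ x : L, x ^ p = algebraMap K L y) :
    ((∃ φ : L →ₗ[K] K, φ ≠ 0 ∧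
        ∀ ψ : L →ₗ[K] K, ∃ ℓ : L, ∀ x : L, ψ x = φ (ℓ * x)) ↔
      FiniteDimensional K L) := by
  constructor
  · rintro ⟨φ, hφ, hgen⟩
    by_contra hfin
    have hinf : ℵ₀ ≤ Module.rank K L := by
      rw [← not_lt]
      intro h
      exact hfin (Module.finite_of_rank_eq_nat (n := (Module.rank K L).toNat)
        (Cardinal.cast_toNat_of_lt_aleph0 h).symm)
    set T : L →ₗ[K] (L →ₗ[K] K) :=
      (LinearMap.llcomp K L L K φ).comp (LinearMap.mul K L) with hT
    have hsurj : Function.Surjective T := by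
      intro ψ
      obtain ⟨ℓ, hℓ⟩ := hgen ψ
      refine ⟨ℓ, ?_⟩
      ext x
      exact (hℓ x).symm
    have h1 := LinearMap.lift_rank_le_of_surjective T hsurj
    have h2 := lift_rank_lt_rank_dual (K := K) (V := L) hinf
    have h3 := (Cardinal.lift_lt.mpr h2).trans_le h1
    simp only [Cardinal.lift_lift] at h3
    exact absurd h3 (lt_irrefl _)
  · intro hfd
    have hpos : 0 < Module.finrank K L := Module.finrank_pos
    let b := Module.finBasis K L
    let i : Fin (Module.finrank K L) := ⟨0, hpos⟩
    set φ : L →ₗ[K] K := b.coord i with hφdef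
    have hφ : φ ≠ 0 := by
      intro h
      have : φ (b i) = 1 := by simp [hφdef]
      rw [h] at this
      simp at this
    set T : L →ₗ[K] (L →ₗ[K] K) :=
      (LinearMap.llcomp K L L K φ).comp (LinearMap.mul K L) with hT
    have hinj : Function.Injective T := by
      rw [injective_iff_map_eq_zero]
      intro ℓ hℓ
      by_contra hne
      apply hφ
      ext y
      have := congrFun (congrArg DFunLike.coe hℓ) (ℓ⁻¹ * y)
      rw [hT] at this
      simp only [LinearMap.comp_apply, LinearMap.llcomp_apply, LinearMap.mul_apply'] at this
      rwa [← mul_assoc, mul_inv_cancel₀ hne, one_mul] at this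
    have hsurj : Function.Surjective T :=
      (LinearMap.injective_iff_surjective_of_finrank_eq_finrank
        (Subspace.dual_finrank_eq (K := K) (V := L)).symm).mp hinj
    refine ⟨φ, hφ, fun ψ => ?_⟩
    obtain ⟨ℓ, hℓ⟩ := hsurj ψ
    exact ⟨ℓ, fun x => by rw [← hℓ]; simp [hT]⟩
end

section
/- Let R be a commutative ring of prime characteristic p, let E be an R-module with an additive map T : E → E satisfying T(rv) = r^p T(v), extended componentwise to E^α. Let A ∈ Mat_{α×β}(R) and B ∈ Mat_{α×α}(R) be matrices such that the column space of B·A is contained in the column space of A^{[p]} (the entrywise p-th power of A). Define φ : E^α → E^α by φ(v) = Bᵗ (T v). Then φ maps the submodule M = {v ∈ E^α : Aᵗ v = 0} into itself, and φ restricted to M is a Frobenius action: φ is additive and φ(r v) = r^p φ(v). -/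
theorem stmt_10 (R : Type*) [CommRing R] (p : ℕ) [Fact p.Prime] [CharP R p]
    (E : Type*) [AddCommGroup E] [Module R E]
    (T : E →+ E) (hT : ∀ (r : R) (v : E), T (r • v) = r ^ p • T v)
    (α β : Type*) [Fintype α] [Fintype β] [DecidableEq α] [DecidableEq β]
    (A : Matrix α β R) (B : Matrix α α R)
    (hBA : ∃ C : Matrix β β R, B * A = (A.map (· ^ p)) * C)
    (φ : (α → E) → (α → E)) (hφ : ∀ v i, φ v i = ∑ j : α, B j i • T (v j)) :
    (∀ v : α → E, (∀ k : β, ∑ i : α, A i k • v i = 0) →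
        (∀ k : β, ∑ i : α, A i k • φ v i = 0)) ∧
      (∀ v w : α → E, φ (v + w) = φ v + φ w) ∧
      (∀ (r : R) (v : α → E), φ (r • v) = r ^ p • φ v) := by
  obtain ⟨C, hC⟩ := hBA
  refine ⟨?_, ?_, ?_⟩
  · intro v hv k
    have key : ∀ m : β, ∑ j : α, (A j m) ^ p • T (v j) = 0 := by
      intro m
      have : ∑ j : α, (A j m) ^ p • T (v j) = T (∑ j : α, A j m • v j) := by
        rw [map_sum]
        exact Finset.sum_congr rfl fun j _ => (hT _ _).symm
      rw [this, hv m, map_zero]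
    calc ∑ i : α, A i k • φ v i
        = ∑ i : α, ∑ j : α, (B j i * A i k) • T (v j) := by
          refine Finset.sum_congr rfl fun i _ => ?_
          rw [hφ, Finset.smul_sum]
          exact Finset.sum_congr rfl fun j _ => by rw [mul_comm, mul_smul]
      _ = ∑ j : α, (∑ i : α, B j i * A i k) • T (v j) := by
          rw [Finset.sum_comm]
          exact Finset.sum_congr rfl fun j _ => (Finset.sum_smul).symm
      _ = ∑ j : α, (∑ m : β, (A j m) ^ p * C m k) • T (v j) := by
          refine Finset.sum_congr rfl fun j _ => ?_
          have := congrFun (congrFun hC j) k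
          simp [Matrix.mul_apply, Matrix.map_apply] at this
          rw [this]
      _ = ∑ m : β, C m k • ∑ j : α, (A j m) ^ p • T (v j) := by
          simp_rw [Finset.sum_smul, Finset.smul_sum]
          rw [Finset.sum_comm]
          exact Finset.sum_congr rfl fun j _ => Finset.sum_congr rfl fun m _ => by
            rw [mul_comm, mul_smul]
      _ = 0 := by simp [key]
  · intro v w
    funext i
    simp only [hφ, Pi.add_apply, map_add, smul_add, Finset.sum_add_distrib]
  · intro r v
    funext i
    simp only [hφ, Pi.smul_apply, hT, Finset.smul_sum, smul_comm r (_ : R)]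
    exact Finset.sum_congr rfl fun x _ => (smul_comm _ _ _)
end

section
/- Let K be a perfect field of prime characteristic p and let R = K[[x₁, …, x_d]]. Let R^{1/p} denote R viewed as an R-module via r · s = r^p s (equivalently, the module of p-th roots). Then Hom_R(R^{1/p}, R) is a free R^{1/p}-module of rank 1, generated by the projection dual to the monomial basis element (x₁⋯x_d)^{(p-1)/p}. -/
/-!
Since `K` is perfect, every power series decomposes uniquely as `t = ∑_c t_c ^ p * X^c` over the
exponents `0 ≤ c ≤ p - 1`, the coefficient of `X^b` in `t_c` being the `p`-th root of the
coefficient of `X^(p • b + c)` in `t` (`frobeniusComponent p c t`). Let `π` take the component at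
the top exponent `c = (p - 1, …, p - 1)`. Multiplying by `X^(top - c)` moves the component `c` to
the top one, so a map with `φ (r ^ p * s) = r * φ s` satisfies
`φ t = ∑_c t_c * φ (X^c) = π ((∑_c φ (X^c) ^ p * X^(top - c)) * t)`,
and `s` is determined by `t ↦ π (s * t)` because its components are the `π (X^(top - c) * s)`.
-/

namespace MvPowerSeries

/-- The exponent of `(x₁ ⋯ x_d) ^ (p - 1)`. -/
noncomputable def topExponent (σ : Type*) [Finite σ] (p : ℕ) : σ →₀ ℕ :=
  Finsupp.equivFunOnFinite.symm fun _ => p - 1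

@[simp]
theorem topExponent_apply {σ : Type*} [Finite σ] (p : ℕ) (i : σ) :
    topExponent σ p i = p - 1 :=
  rfl

theorem lt_of_le_topExponent {σ : Type*} [Finite σ] {p : ℕ} (hp : p ≠ 0) {c : σ →₀ ℕ}
    (hc : c ≤ topExponent σ p) (i : σ) : c i < p := by
  have := hc i
  simp only [topExponent_apply] at this
  omega

variable {σ K : Type*} [CommRing K] (p : ℕ) [ExpChar K p]

theorem coeff_pow_expChar_nsmul (f : MvPowerSeries σ K) (m : σ →₀ ℕ) :
    coeff (p • m) (f ^ p) = coeff m f ^ p := by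
  rw [← map_frobenius_expand p (expChar_ne_zero K p), coeff_map, coeff_expand_smul,
    frobenius_def]

theorem coeff_pow_expChar_of_not_dvd (f : MvPowerSeries σ K) {m : σ →₀ ℕ} {i : σ}
    (h : ¬p ∣ m i) : coeff m (f ^ p) = 0 := by
  rw [← map_frobenius_expand p (expChar_ne_zero K p), coeff_map,
    coeff_expand_of_not_dvd p _ _ h, map_zero]

theorem coeff_nsmul_add_pow_expChar_mul_monomial [DecidableEq σ] {c c' : σ →₀ ℕ}
    (hc : ∀ i, c i < p) (hc' : ∀ i, c' i < p) (g : MvPowerSeries σ K) (b : σ →₀ ℕ) :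
    coeff (p • b + c) (g ^ p * monomial c' 1) = if c' = c then coeff b g ^ p else 0 := by
  rw [coeff_mul_monomial, mul_one]
  by_cases heq : c' = c
  · subst heq
    rw [if_pos le_add_self, if_pos rfl, add_tsub_cancel_right, coeff_pow_expChar_nsmul]
  rw [if_neg heq]
  split_ifs with hle
  · obtain ⟨i, hi⟩ := DFunLike.ne_iff.mp heq
    refine coeff_pow_expChar_of_not_dvd p g (i := i) fun ⟨k, hk⟩ => hi ?_
    have hki : p * b i + c i = p * k + c' i := by
      have := hle i
      simp only [Finsupp.tsub_apply, Finsupp.add_apply, Finsupp.smul_apply, smul_eq_mul]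
        at hk this
      omega
    have := congrArg (· % p) hki
    simpa only [Nat.mul_add_mod, Nat.mod_eq_of_lt (hc i), Nat.mod_eq_of_lt (hc' i)]
      using this.symm
  · rfl

variable [PerfectRing K p]

noncomputable def frobeniusComponent (c : σ →₀ ℕ) :
    MvPowerSeries σ K →+ MvPowerSeries σ K where
  toFun t b := (frobeniusEquiv K p).symm (coeff (p • b + c) t)
  map_zero' := by ext b; exact (frobeniusEquiv K p).symm.map_zero
  map_add' s t := by ext b; exact (frobeniusEquiv K p).symm.map_add _ _

theorem coeff_frobeniusComponent (c : σ →₀ ℕ) (t : MvPowerSeries σ K) (b : σ →₀ ℕ) :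
    coeff b (frobeniusComponent p c t) = (frobeniusEquiv K p).symm (coeff (p • b + c) t) :=
  rfl

theorem frobeniusComponent_pow_mul_monomial [DecidableEq σ] {c c' : σ →₀ ℕ}
    (hc : ∀ i, c i < p) (hc' : ∀ i, c' i < p) (g : MvPowerSeries σ K) :
    frobeniusComponent p c (g ^ p * monomial c' 1) = if c' = c then g else 0 := by
  ext b
  rw [coeff_frobeniusComponent, coeff_nsmul_add_pow_expChar_mul_monomial p hc hc']
  split_ifs <;> simp [frobeniusEquiv_symm_pow]

section Finite

variable [Finite σ]

theorem sum_frobeniusComponent_pow_mul_monomial [DecidableEq σ] (t : MvPowerSeries σ K) :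
    ∑ c ∈ Finset.Iic (topExponent σ p), frobeniusComponent p c t ^ p * monomial c 1 = t := by
  ext a
  set q := a.mapRange (· / p) (Nat.zero_div p)
  set r := a.mapRange (· % p) (Nat.zero_mod p)
  have hr (i : σ) : r i < p := Nat.mod_lt _ (expChar_pos K p)
  have hqr : p • q + r = a := by ext i; simp [q, r, Nat.div_add_mod]
  rw [← hqr, map_sum, Finset.sum_congr rfl fun c hc =>
    coeff_nsmul_add_pow_expChar_mul_monomial p hr
      (lt_of_le_topExponent (expChar_ne_zero K p) (Finset.mem_Iic.mp hc)) _ _,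
    Finset.sum_ite_eq', if_pos (Finset.mem_Iic.mpr fun i => Nat.le_sub_one_of_lt (hr i)),
    coeff_frobeniusComponent, frobeniusEquiv_symm_pow_p]

theorem eq_of_frobeniusComponent_eq {s t : MvPowerSeries σ K}
    (h : ∀ c ≤ topExponent σ p, frobeniusComponent p c s = frobeniusComponent p c t) :
    s = t := by
  classical
  rw [← sum_frobeniusComponent_pow_mul_monomial p s,
    ← sum_frobeniusComponent_pow_mul_monomial p t]
  exact Finset.sum_congr rfl fun c hc => by rw [h c (Finset.mem_Iic.mp hc)]

theorem frobeniusComponent_pow_mul {c : σ →₀ ℕ} (hc : c ≤ topExponent σ p)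
    (r t : MvPowerSeries σ K) :
    frobeniusComponent p c (r ^ p * t) = r * frobeniusComponent p c t := by
  classical
  have hp := expChar_ne_zero K p
  conv_lhs => rw [← sum_frobeniusComponent_pow_mul_monomial p t]
  simp_rw [Finset.mul_sum, ← mul_assoc, ← mul_pow, map_sum]
  rw [Finset.sum_congr rfl fun c' hc' => frobeniusComponent_pow_mul_monomial p
    (lt_of_le_topExponent hp hc) (lt_of_le_topExponent hp (Finset.mem_Iic.mp hc')) _,
    Finset.sum_ite_eq', if_pos (Finset.mem_Iic.mpr hc)]

theorem frobeniusComponent_topExponent_monomial_mul {c : σ →₀ ℕ}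
    (hc : c ≤ topExponent σ p) (t : MvPowerSeries σ K) :
    frobeniusComponent p (topExponent σ p) (monomial (topExponent σ p - c) 1 * t) =
      frobeniusComponent p c t := by
  ext b
  have hle : topExponent σ p - c ≤ p • b + topExponent σ p := tsub_le_self.trans le_add_self
  have hidx : p • b + topExponent σ p - (topExponent σ p - c) = p • b + c := by
    ext i
    have := hc i
    simp only [Finsupp.tsub_apply, Finsupp.add_apply, topExponent_apply] at this ⊢
    omega
  rw [coeff_frobeniusComponent, coeff_frobeniusComponent, coeff_monomial_mul, if_pos hle,
    one_mul, hidx]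

theorem frobeniusComponent_topExponent_monomial [DecidableEq σ] {a : σ →₀ ℕ}
    (ha : ∀ i, a i < p) :
    frobeniusComponent p (topExponent σ p) (monomial a (1 : K)) =
      if a = topExponent σ p then 1 else 0 := by
  simpa using frobeniusComponent_pow_mul_monomial p
    (lt_of_le_topExponent (expChar_ne_zero K p) le_rfl) ha (1 : MvPowerSeries σ K)

theorem exists_frobeniusComponent_topExponent_mul
    (φ : MvPowerSeries σ K →+ MvPowerSeries σ K) (hφ : ∀ r s, φ (r ^ p * s) = r * φ s) :
    ∃ s, ∀ t, φ t = frobeniusComponent p (topExponent σ p) (s * t) := by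
  classical
  refine ⟨∑ c ∈ Finset.Iic (topExponent σ p),
    φ (monomial c 1) ^ p * monomial (topExponent σ p - c) 1, fun t => ?_⟩
  conv_lhs => rw [← sum_frobeniusComponent_pow_mul_monomial p t]
  rw [map_sum, Finset.sum_mul, map_sum]
  refine Finset.sum_congr rfl fun c hc => ?_
  rw [hφ, mul_assoc, frobeniusComponent_pow_mul p le_rfl,
    frobeniusComponent_topExponent_monomial_mul p (Finset.mem_Iic.mp hc), mul_comm]

theorem frobeniusComponent_topExponent_mul_injective {s s' : MvPowerSeries σ K}
    (h : ∀ t, frobeniusComponent p (topExponent σ p) (s * t) =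
      frobeniusComponent p (topExponent σ p) (s' * t)) : s = s' :=
  eq_of_frobeniusComponent_eq p fun c hc => by
    rw [← frobeniusComponent_topExponent_monomial_mul p hc,
      ← frobeniusComponent_topExponent_monomial_mul p hc s', mul_comm, h, mul_comm]

end Finite

end MvPowerSeries

open MvPowerSeries in
theorem stmt_13 (K : Type*) [Field K] (p : ℕ) [Fact p.Prime] [CharP K p]
    [PerfectRing K p] (d : ℕ) :
    ∃ π : MvPowerSeries (Fin d) K → MvPowerSeries (Fin d) K,
      (∀ s t, π (s + t) = π s + π t) ∧
      (∀ r s, π (r ^ p * s) = r * π s) ∧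
      (∀ a : Fin d →₀ ℕ, (∀ i, a i < p) →
        π (monomial (R := K) a 1) = if ∀ i, a i = p - 1 then 1 else 0) ∧
      (∀ φ : MvPowerSeries (Fin d) K → MvPowerSeries (Fin d) K,
        (∀ s t, φ (s + t) = φ s + φ t) → (∀ r s, φ (r ^ p * s) = r * φ s) →
        ∃! s : MvPowerSeries (Fin d) K, ∀ t, φ t = π (s * t)) := by
  refine ⟨frobeniusComponent p (topExponent (Fin d) p), map_add _,
    frobeniusComponent_pow_mul p le_rfl, fun a ha => ?_, fun φ hadd hφ => ?_⟩
  · simp only [frobeniusComponent_topExponent_monomial p ha, Finsupp.ext_iff, topExponent_apply]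
  · obtain ⟨s, hs⟩ :=
      exists_frobeniusComponent_topExponent_mul p (AddMonoidHom.mk' φ hadd) hφ
    exact ⟨s, hs, fun s' hs' =>
      frobeniusComponent_topExponent_mul_injective p fun t => (hs' t).symm.trans (hs t)⟩
end
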